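/- arXiv:2605.00445 — 4 statements merged into one kernel-verified Lean document; each statement's English description precedes it below -/
import Mathlib

section
/- Sinkhorn's theorem (existence): for every real n×n matrix A with all entries strictly positive, there exist diagonal n×n matrices D₁ and D₂ with strictly positive diagonal entries such that D₁ A D₂ is doubly stochastic. -/
/-!
Write `D₂ = diag (exp b)` and let `D₁` normalise the rows of `A D₂`. The column sums of
`D₁ A D₂` are then `1 + ∂F/∂bⱼ` for the potential `F b = ∑ᵢ log (∑ⱼ Aᵢⱼ exp bⱼ) - ∑ⱼ bⱼ`, so it
suffices to find a minimiser of `F`. `F` is invariant under adding a constant to `b`, and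
`F b ≥ ∑ᵢ log Aᵢₖ + ∑ⱼ (bₖ - bⱼ)` for every `k`; taking `k` with `bₖ` maximal shows that every
sublevel set of `F` is, up to such shifts, contained in a compact box.
-/

open Matrix Finset Real

lemma mulVec_pos {n : Type*} [Fintype n] {A : Matrix n n ℝ} (hA : ∀ i j, 0 < A i j)
    {v : n → ℝ} (hv : ∀ j, 0 < v j) (i : n) : 0 < (A *ᵥ v) i :=
  sum_pos (fun j _ => mul_pos (hA i j) (hv j)) ⟨i, mem_univ i⟩

lemma diagonal_mul_mul_diagonal_mem_doublyStochastic {R n : Type*} [Fintype n] [DecidableEq n]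
    [Semiring R] [PartialOrder R] [IsOrderedRing R] {A : Matrix n n R} {d₁ d₂ : n → R}
    (hA : ∀ i j, 0 ≤ A i j) (hd₁ : ∀ i, 0 ≤ d₁ i) (hd₂ : ∀ j, 0 ≤ d₂ j)
    (hrow : d₁ * (A *ᵥ d₂) = 1) (hcol : (d₁ ᵥ* A) * d₂ = 1) :
    diagonal d₁ * A * diagonal d₂ ∈ doublyStochastic R n := by
  have hd₂_one : diagonal d₂ *ᵥ 1 = d₂ := by ext; simp [mulVec_diagonal]
  have hd₁_one : 1 ᵥ* diagonal d₁ = d₁ := by ext; simp [vecMul_diagonal]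
  refine ⟨fun i j => ?_, .trans ?_ hrow, .trans ?_ hcol⟩
  · rw [mul_diagonal, diagonal_mul]
    exact mul_nonneg (mul_nonneg (hd₁ i) (hA i j)) (hd₂ j)
  · ext i
    rw [← mulVec_mulVec, ← mulVec_mulVec, hd₂_one, mulVec_diagonal, Pi.mul_apply]
  · ext j
    rw [← vecMul_vecMul, ← vecMul_vecMul, hd₁_one, vecMul_diagonal, Pi.mul_apply]

section Sinkhorn

variable {ι : Type*} [Fintype ι] {A : Matrix ι ι ℝ}

noncomputable def sinkhornPotential (A : Matrix ι ι ℝ) (b : ι → ℝ) : ℝ :=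
  ∑ i, log ((A *ᵥ (exp ∘ b)) i) - ∑ j, b j

lemma mulVec_exp_pos (hA : ∀ i j, 0 < A i j) (b : ι → ℝ) (i : ι) : 0 < (A *ᵥ (exp ∘ b)) i :=
  mulVec_pos hA (fun j => exp_pos (b j)) i

lemma continuous_sinkhornPotential (hA : ∀ i j, 0 < A i j) :
    Continuous (sinkhornPotential A) := by
  unfold sinkhornPotential
  fun_prop (disch := exact fun b => (mulVec_exp_pos hA b _).ne')

lemma sinkhornPotential_sub_const (hA : ∀ i j, 0 < A i j) (b : ι → ℝ) (c : ℝ) :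
    sinkhornPotential A (fun j => b j - c) = sinkhornPotential A b := by
  have hrow (i : ι) : (A *ᵥ (exp ∘ fun j => b j - c)) i = (A *ᵥ (exp ∘ b)) i / exp c := by
    simp only [mulVec, dotProduct, Function.comp_apply, exp_sub, sum_div, mul_div_assoc]
  simp only [sinkhornPotential, hrow, log_div (mulVec_exp_pos hA b _).ne' (exp_ne_zero c), log_exp,
    sum_sub_distrib]
  ring

lemma le_sinkhornPotential (hA : ∀ i j, 0 < A i j) (b : ι → ℝ) (k : ι) :
    ∑ i, log (A i k) + ∑ j, (b k - b j) ≤ sinkhornPotential A b := by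
  have hrow (i : ι) : log (A i k) + b k ≤ log ((A *ᵥ (exp ∘ b)) i) := by
    rw [← log_exp (b k), ← log_mul (hA i k).ne' (exp_ne_zero _)]
    exact log_le_log (mul_pos (hA i k) (exp_pos _)) <|
      single_le_sum (f := fun j => A i j * exp (b j))
        (fun j _ => (mul_pos (hA i j) (exp_pos _)).le) (mem_univ k)
  calc ∑ i, log (A i k) + ∑ j, (b k - b j)
      = ∑ i, (log (A i k) + b k) - ∑ j, b j := by
        simp only [sum_add_distrib, sum_sub_distrib, sum_const, card_univ]; ring
    _ ≤ sinkhornPotential A b := sub_le_sub_right (sum_le_sum fun i _ => hrow i) _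

lemma exists_forall_sinkhornPotential_le (hA : ∀ i j, 0 < A i j) :
    ∃ b, ∀ b', sinkhornPotential A b ≤ sinkhornPotential A b' := by
  rcases isEmpty_or_nonempty ι with _ | _
  · exact ⟨0, fun b' => Subsingleton.elim b' (0 : ι → ℝ) ▸ le_rfl⟩
  set F := sinkhornPotential A
  obtain ⟨k₀, hk₀⟩ := Finite.exists_min fun k => ∑ i, log (A i k)
  set C := F 0 - ∑ i, log (A i k₀)
  have hC : 0 ≤ C := by simpa [C] using le_sinkhornPotential hA (0 : ι → ℝ) k₀
  have h0 : (0 : ι → ℝ) ∈ Set.Icc (fun _ : ι => -C) 0 := ⟨fun _ => by simpa using hC, le_rfl⟩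
  have hbox (b : ι → ℝ) (hb : F b ≤ F 0) :
      ∃ b' ∈ Set.Icc (fun _ : ι => -C) 0, F b' = F b := by
    obtain ⟨k, hk⟩ := Finite.exists_max b
    refine ⟨fun j => b j - b k, ⟨fun j => ?_, fun j => sub_nonpos.2 (hk j)⟩,
      sinkhornPotential_sub_const hA b (b k)⟩
    have hF := le_sinkhornPotential hA b k
    have hj := single_le_sum (f := fun l => b k - b l) (fun l _ => sub_nonneg.2 (hk l))
      (mem_univ j)
    have := hk₀ k
    simp only at hj this ⊢
    linarith
  obtain ⟨b, -, hmin⟩ :=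
    isCompact_Icc.exists_isMinOn ⟨0, h0⟩ (continuous_sinkhornPotential hA).continuousOn
  refine ⟨b, fun b' => ?_⟩
  rcases le_total (F b') (F 0) with h | h
  · obtain ⟨b'', hb'', heq⟩ := hbox b' h
    exact heq ▸ hmin hb''
  · exact (hmin h0).trans h

lemma hasDerivAt_sinkhornPotential_update [DecidableEq ι] (hA : ∀ i j, 0 < A i j)
    (b : ι → ℝ) (j : ι) :
    HasDerivAt (fun t => sinkhornPotential A (Function.update b j t))
      (((A *ᵥ (exp ∘ b))⁻¹ ᵥ* A) j * exp (b j) - 1) (b j) := by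
  have hcoord (k : ι) :
      HasDerivAt (fun t => Function.update b j t k) ((Pi.single j 1 : ι → ℝ) k) (b j) :=
    hasDerivAt_pi.1 (hasDerivAt_update b j (b j)) k
  have hrow (i : ι) : HasDerivAt (fun t => (A *ᵥ (exp ∘ Function.update b j t)) i)
      (A i j * exp (b j)) (b j) := by
    refine (HasDerivAt.fun_sum fun k _ => ((hcoord k).exp).const_mul (A i k)).congr_deriv ?_
    simp [Pi.single_apply]
  have hsum : HasDerivAt (fun t => ∑ k, Function.update b j t k) 1 (b j) := by
    refine (HasDerivAt.fun_sum fun k _ => hcoord k).congr_deriv ?_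
    simp
  refine ((HasDerivAt.fun_sum fun i _ => (hrow i).log
    (by simpa using (mulVec_exp_pos hA b i).ne')).sub hsum).congr_deriv ?_
  simp [vecMul, dotProduct, sum_mul, div_eq_inv_mul, mul_assoc]

lemma vecMul_mul_exp_eq_one_of_forall_le (hA : ∀ i j, 0 < A i j) {b : ι → ℝ}
    (hb : ∀ b', sinkhornPotential A b ≤ sinkhornPotential A b') :
    ((A *ᵥ (exp ∘ b))⁻¹ ᵥ* A) * (exp ∘ b) = 1 := by
  classical
  funext j
  have hmin : IsLocalMin (fun t => sinkhornPotential A (Function.update b j t)) (b j) :=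
    .of_forall fun t => by simpa using hb _
  simpa [sub_eq_zero] using hmin.hasDerivAt_eq_zero (hasDerivAt_sinkhornPotential_update hA b j)

end Sinkhorn

/-- **Sinkhorn's theorem (existence).** For every real `n × n` matrix `A` with strictly positive
entries, there exist diagonal matrices `D₁`, `D₂` with strictly positive diagonal entries such
that `D₁ * A * D₂` is doubly stochastic. -/
theorem sinkhorn_existence (n : ℕ) (A : Matrix (Fin n) (Fin n) ℝ)
    (hA : ∀ i j, 0 < A i j) :
    ∃ d₁ d₂ : Fin n → ℝ, (∀ i, 0 < d₁ i) ∧ (∀ i, 0 < d₂ i) ∧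
      diagonal d₁ * A * diagonal d₂ ∈ doublyStochastic ℝ (Fin n) := by
  obtain ⟨b, hb⟩ := exists_forall_sinkhornPotential_le hA
  have hd₁ (i : Fin n) : 0 < (A *ᵥ (exp ∘ b))⁻¹ i := inv_pos.2 (mulVec_exp_pos hA b i)
  have hd₂ (j : Fin n) : 0 < (exp ∘ b) j := exp_pos (b j)
  refine ⟨_, _, hd₁, hd₂, diagonal_mul_mul_diagonal_mem_doublyStochastic (fun i j => (hA i j).le)
    (fun i => (hd₁ i).le) (fun j => (hd₂ j).le) ?_ (vecMul_mul_exp_eq_one_of_forall_le hA hb)⟩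
  funext i
  exact inv_mul_cancel₀ (mulVec_exp_pos hA b i).ne'
end

section
/- Sinkhorn's theorem (uniqueness): for a real n×n matrix A with all entries strictly positive, the doubly stochastic matrix of the form D₁ A D₂, where D₁ and D₂ are diagonal matrices with strictly positive diagonal entries, is unique; that is, if D₁ A D₂ and D₁' A D₂' are both doubly stochastic with D₁, D₂, D₁', D₂' diagonal with strictly positive diagonals, then D₁ A D₂ = D₁' A D₂'. -/
open Matrix

private lemma sinkhorn_aux (n : ℕ) (hn : 0 < n) (B : Matrix (Fin n) (Fin n) ℝ)
    (hB : ∀ i j, 0 < B i j)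
    (hrow : ∀ i, ∑ j, B i j = 1) (hcol : ∀ j, ∑ i, B i j = 1)
    (r c : Fin n → ℝ) (hr : ∀ i, 0 < r i) (_hc : ∀ j, 0 < c j)
    (hrow' : ∀ i, ∑ j, r i * c j * B i j = 1)
    (hcol' : ∀ j, ∑ i, r i * c j * B i j = 1) :
    ∀ i j, r i * c j = 1 := by
  have : Nonempty (Fin n) := ⟨⟨0, hn⟩⟩
  obtain ⟨j₀, -, hj₀⟩ := Finset.exists_max_image Finset.univ c Finset.univ_nonempty
  -- Step 1: r i * c j₀ ≥ 1 for all i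
  have h1 : ∀ i, 1 ≤ r i * c j₀ := by
    intro i
    have hsum : ∑ j, c j * B i j ≤ c j₀ := by
      calc ∑ j, c j * B i j ≤ ∑ j, c j₀ * B i j := by
            apply Finset.sum_le_sum
            intro j _
            exact mul_le_mul_of_nonneg_right (hj₀ j (Finset.mem_univ j)) (hB i j).le
        _ = c j₀ * ∑ j, B i j := by rw [Finset.mul_sum]
        _ = c j₀ := by rw [hrow i, mul_one]
    have h2 : r i * ∑ j, c j * B i j = 1 := by
      rw [Finset.mul_sum]
      rw [← hrow' i]
      congr 1; funext j; ring
    calc (1:ℝ) = r i * ∑ j, c j * B i j := h2.symm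
      _ ≤ r i * c j₀ := mul_le_mul_of_nonneg_left hsum (hr i).le
  -- Step 2: r i * c j₀ = 1 for all i
  have h2 : ∀ i, r i * c j₀ = 1 := by
    have hle : ∀ i ∈ Finset.univ, B i j₀ ≤ r i * c j₀ * B i j₀ := by
      intro i _
      nlinarith [h1 i, hB i j₀]
    have heq : ∑ i, B i j₀ = ∑ i, r i * c j₀ * B i j₀ := by
      rw [hcol j₀, hcol' j₀]
    have := (Finset.sum_eq_sum_iff_of_le hle).mp heq
    intro i
    have hi := this i (Finset.mem_univ i)
    have := hB i j₀
    nlinarith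
  -- Step 3: c j = c j₀ for all j
  have h3 : ∀ j, c j = c j₀ := by
    intro j
    -- fix some i
    obtain ⟨i⟩ := ‹Nonempty (Fin n)›
    have hle : ∀ j ∈ Finset.univ, c j * B i j ≤ c j₀ * B i j := by
      intro j _
      exact mul_le_mul_of_nonneg_right (hj₀ j (Finset.mem_univ j)) (hB i j).le
    have heq : ∑ j, c j * B i j = ∑ j, c j₀ * B i j := by
      have hA : r i * ∑ j, c j * B i j = 1 := by
        rw [Finset.mul_sum, ← hrow' i]
        congr 1; funext j; ring
      have hB' : ∑ j, c j₀ * B i j = c j₀ := by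
        rw [← Finset.mul_sum, hrow i, mul_one]
      have hri : r i * c j₀ = 1 := h2 i
      have hrpos := hr i
      have : ∑ j, c j * B i j = c j₀ := by
        have h := hA
        field_simp at h ⊢
        nlinarith
      rw [this, hB']
    have := (Finset.sum_eq_sum_iff_of_le hle).mp heq j (Finset.mem_univ j)
    have := hB i j
    nlinarith
  intro i j
  rw [h3 j]; exact h2 i

/-- **Sinkhorn's theorem (uniqueness).** For a real `n × n` matrix `A` with strictly positive
entries, the doubly stochastic matrix of the form `D₁ * A * D₂` with `D₁`, `D₂` diagonal with
strictly positive diagonal entries is unique. -/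
theorem sinkhorn_uniqueness (n : ℕ) (A : Matrix (Fin n) (Fin n) ℝ)
    (hA : ∀ i j, 0 < A i j) (d₁ d₂ d₁' d₂' : Fin n → ℝ)
    (hd₁ : ∀ i, 0 < d₁ i) (hd₂ : ∀ i, 0 < d₂ i)
    (hd₁' : ∀ i, 0 < d₁' i) (hd₂' : ∀ i, 0 < d₂' i)
    (hDS : diagonal d₁ * A * diagonal d₂ ∈ doublyStochastic ℝ (Fin n))
    (hDS' : diagonal d₁' * A * diagonal d₂' ∈ doublyStochastic ℝ (Fin n)) :
    diagonal d₁ * A * diagonal d₂ = diagonal d₁' * A * diagonal d₂' := by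
  rcases Nat.eq_zero_or_pos n with rfl | hn
  · ext i j; exact i.elim0
  have hentry : ∀ i j, (diagonal d₁ * A * diagonal d₂) i j = d₁ i * A i j * d₂ j := by
    intro i j
    rw [mul_diagonal, diagonal_mul]
  have hentry' : ∀ i j, (diagonal d₁' * A * diagonal d₂') i j = d₁' i * A i j * d₂' j := by
    intro i j
    rw [mul_diagonal, diagonal_mul]
  rw [mem_doublyStochastic_iff_sum] at hDS hDS'
  obtain ⟨-, hrow, hcol⟩ := hDS
  obtain ⟨-, hrow', hcol'⟩ := hDS'
  set B : Matrix (Fin n) (Fin n) ℝ := fun i j => d₁ i * A i j * d₂ j with hBdef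
  set r : Fin n → ℝ := fun i => d₁' i / d₁ i with hrdef
  set c : Fin n → ℝ := fun j => d₂' j / d₂ j with hcdef
  have hBpos : ∀ i j, 0 < B i j := fun i j => by
    exact mul_pos (mul_pos (hd₁ i) (hA i j)) (hd₂ j)
  have hrpos : ∀ i, 0 < r i := fun i => div_pos (hd₁' i) (hd₁ i)
  have hcpos : ∀ j, 0 < c j := fun j => div_pos (hd₂' j) (hd₂ j)
  have hkey : ∀ i j, r i * c j * B i j = d₁' i * A i j * d₂' j := by
    intro i j
    have h1 : d₁ i ≠ 0 := (hd₁ i).ne'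
    have h2 : d₂ j ≠ 0 := (hd₂ j).ne'
    simp only [hBdef, hrdef, hcdef]
    field_simp
  have hBrow : ∀ i, ∑ j, B i j = 1 := by
    intro i; rw [← hrow i]; congr 1; funext j; exact (hentry i j).symm
  have hBcol : ∀ j, ∑ i, B i j = 1 := by
    intro j; rw [← hcol j]; congr 1; funext i; exact (hentry i j).symm
  have hBrow' : ∀ i, ∑ j, r i * c j * B i j = 1 := by
    intro i; rw [← hrow' i]
    refine Finset.sum_congr rfl fun j _ => ?_
    rw [hkey, hentry']
  have hBcol' : ∀ j, ∑ i, r i * c j * B i j = 1 := by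
    intro j; rw [← hcol' j]
    refine Finset.sum_congr rfl fun i _ => ?_
    rw [hkey, hentry']
  have := sinkhorn_aux n hn B hBpos hBrow hBcol r c hrpos hcpos hBrow' hBcol'
  ext i j
  rw [hentry, hentry', ← hkey i j, this i j, one_mul]
end

section
/- Sinkhorn iteration convergence: let θ be a real n×n matrix, set S⁰ = exp(θ) (entrywise exponential, hence all entries strictly positive), and define S^{i+1} = N_c(N_r(S^i)), where N_r is row normalization and N_c is column normalization. Then the sequence (S^i) converges (entrywise) as i → ∞, and its limit is an n×n doubly stochastic matrix. -/
/-!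
Write `Sᵏ = diag x · A · diag y` with `A = exp θ`. Row normalization resets `x` to `(A y)⁻¹` and
column normalization resets `y` to `(xᵀ A)⁻¹`, so the iteration is driven by the column scalings
`y (k + 1) = F (y k)` with `F y = (((A y)⁻¹)ᵀ A)⁻¹`. Measure how far apart the ratios `u i / v i`
are by the least `R` with `max (u / v) ≤ R · min (u / v)` (so `log R` is Hilbert's projective
distance). Entrywise inversion preserves `R`, and multiplication by `A` contracts it,
`R - 1 ↦ (1 - κ) (R - 1)`, where `κ > 0` bounds the cross ratios of `A` from below. Hence the
ratios `y (k + 1) / y k` are within a factor `1 + C (1 - κ) ^ (2 k)` of each other; since a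
normalization step keeps the total mass `n`, they also straddle `1`. So `log y k` converges
geometrically, its limit gives a positive fixed point `y` of `F`, and `diag (A y)⁻¹ · A · diag y`
is doubly stochastic.
-/

open Matrix

/-- Row normalization: divide each entry by its row sum. -/
noncomputable def rowNorm {n : ℕ} (X : Matrix (Fin n) (Fin n) ℝ) : Matrix (Fin n) (Fin n) ℝ :=
  Matrix.of fun i j => X i j / ∑ j', X i j'

/-- Column normalization: divide each entry by its column sum. -/
noncomputable def colNorm {n : ℕ} (X : Matrix (Fin n) (Fin n) ℝ) : Matrix (Fin n) (Fin n) ℝ :=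
  Matrix.of fun i j => X i j / ∑ i', X i' j

/-- The Sinkhorn iteration: `S⁰ = exp θ` (entrywise) and `Sⁱ⁺¹ = N_c (N_r Sⁱ)`. -/
noncomputable def sinkhornSeq {n : ℕ} (θ : Matrix (Fin n) (Fin n) ℝ) :
    ℕ → Matrix (Fin n) (Fin n) ℝ
  | 0 => Matrix.of fun i j => Real.exp (θ i j)
  | k + 1 => colNorm (rowNorm (sinkhornSeq θ k))

open Filter Topology

section RatiosWithin

variable {m n : Type*}

def RatiosWithin (R : ℝ) (u v : n → ℝ) : Prop :=
  ∀ i j, u i * v j ≤ R * (u j * v i)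

def CrossRatiosAtLeast (κ : ℝ) (A : Matrix m n ℝ) : Prop :=
  ∀ i i' l l', κ * (A i' l * A i l') ≤ A i l * A i' l'

theorem exists_ratiosWithin [Finite n] {u v : n → ℝ} (hu : ∀ i, 0 < u i) (hv : ∀ i, 0 < v i) :
    ∃ R, 1 ≤ R ∧ RatiosWithin R u v := by
  obtain ⟨R, hR⟩ := (Set.finite_range fun p : n × n => u p.1 * v p.2 / (u p.2 * v p.1)).bddAbove
  refine ⟨max R 1, le_max_right _ _, fun i j => ?_⟩
  have h := (hR ⟨(i, j), rfl⟩).trans (le_max_left R 1)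
  rwa [div_le_iff₀ (mul_pos (hu j) (hv i))] at h

theorem exists_crossRatiosAtLeast [Finite m] [Finite n] {A : Matrix m n ℝ} (hA : ∀ i j, 0 < A i j) :
    ∃ κ, 0 < κ ∧ κ ≤ 1 ∧ CrossRatiosAtLeast κ A := by
  obtain ⟨C, hC⟩ := (Set.finite_range fun q : m × m × n × n =>
    A q.2.1 q.2.2.1 * A q.1 q.2.2.2 / (A q.1 q.2.2.1 * A q.2.1 q.2.2.2)).bddAbove
  refine ⟨(max C 1)⁻¹, by positivity, inv_le_one_of_one_le₀ (le_max_right _ _),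
    fun i i' l l' => ?_⟩
  have h := (hC ⟨(i, i', l, l'), rfl⟩).trans (le_max_left C 1)
  rw [div_le_iff₀ (mul_pos (hA i l) (hA i' l'))] at h
  rw [inv_mul_le_iff₀ (by positivity)]
  linarith

theorem CrossRatiosAtLeast.transpose {κ : ℝ} {A : Matrix m n ℝ} (h : CrossRatiosAtLeast κ A) :
    CrossRatiosAtLeast κ Aᵀ := fun i i' l l' => by
  simpa only [transpose_apply, mul_comm] using h l l' i i'

theorem RatiosWithin.inv {R : ℝ} {u v : n → ℝ} (hu : ∀ i, 0 < u i) (hv : ∀ i, 0 < v i)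
    (h : RatiosWithin R u v) : RatiosWithin R u⁻¹ v⁻¹ := fun i j => by
  simp only [Pi.inv_apply]
  rw [← mul_inv, ← mul_inv, ← div_eq_mul_inv, inv_eq_one_div,
    div_le_div_iff₀ (mul_pos (hu i) (hv j)) (mul_pos (hu j) (hv i))]
  linarith [h j i]

/-- `(A *ᵥ u) i / (A *ᵥ v) i` is the average of the ratios `u l / v l` with weights `A i l * v l`;
the cross-ratio bound makes the weights of any two rows `i`, `i'` share a fraction `κ` of their
mass, which pulls the two averages together. -/
theorem RatiosWithin.mulVec [Fintype n] {κ R : ℝ} {A : Matrix m n ℝ} {u v : n → ℝ}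
    (hA : ∀ i j, 0 < A i j) (hκ : CrossRatiosAtLeast κ A) (hv : ∀ j, 0 < v j)
    (h : RatiosWithin R u v) : RatiosWithin (κ + (1 - κ) * R) (A *ᵥ u) (A *ᵥ v) := by
  intro i i'
  rcases isEmpty_or_nonempty n with hn | hn
  · simp [Matrix.mulVec, dotProduct]
  set a := A *ᵥ v
  set b := A *ᵥ u
  have ha : 0 < a i' := Finset.sum_pos (fun l _ => mul_pos (hA i' l) (hv l)) Finset.univ_nonempty
  set q : n → ℝ := fun l => A i l * a i' - κ * A i' l * a i
  have hq : ∀ l, 0 ≤ q l := fun l => by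
    suffices ∑ l', κ * (A i' l * A i l') * v l' ≤ ∑ l', A i l * A i' l' * v l' by
      simp only [q, a, Matrix.mulVec, dotProduct, Finset.mul_sum]
      rw [sub_nonneg]
      convert this using 2 <;> ring
    exact Finset.sum_le_sum fun l' _ => mul_le_mul_of_nonneg_right (hκ i i' l l') (hv l').le
  have hu : ∀ l, u l * a i' ≤ R * b i' * v l := fun l => by
    suffices ∑ l', A i' l' * (u l * v l') ≤ ∑ l', A i' l' * (R * (u l' * v l)) by
      simp only [a, b, Matrix.mulVec, dotProduct, Finset.mul_sum, Finset.sum_mul]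
      convert this using 2 <;> ring
    exact Finset.sum_le_sum fun l' _ => mul_le_mul_of_nonneg_left (h l l') (hA i' l').le
  have hq_sum : ∀ w : n → ℝ, ∑ l, q l * w l = a i' * (A *ᵥ w) i - κ * a i * (A *ᵥ w) i' := by
    intro w
    simp only [q, Matrix.mulVec, dotProduct, sub_mul, Finset.sum_sub_distrib, Finset.mul_sum]
    congr 1 <;> exact Finset.sum_congr rfl fun _ _ => by ring
  have key : (∑ l, q l * u l) * a i' ≤ (1 - κ) * R * b i' * a i * a i' :=
    calc (∑ l, q l * u l) * a i' = ∑ l, q l * (u l * a i') := by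
          rw [Finset.sum_mul]; simp only [mul_assoc]
      _ ≤ ∑ l, q l * (R * b i' * v l) :=
          Finset.sum_le_sum fun l _ => mul_le_mul_of_nonneg_left (hu l) (hq l)
      _ = R * b i' * ∑ l, q l * v l := by rw [Finset.mul_sum]; congr 1; ext l; ring
      _ = (1 - κ) * R * b i' * a i * a i' := by rw [hq_sum]; ring
  refine le_of_mul_le_mul_right ?_ ha
  linear_combination key - a i' * hq_sum u

theorem RatiosWithin.abs_log_sub_log_le {R : ℝ} {u v : n → ℝ} (hu : ∀ i, 0 < u i)
    (hv : ∀ i, 0 < v i) (h : RatiosWithin R u v) (hle : ∃ j, u j ≤ v j) (hge : ∃ j, v j ≤ u j)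
    (i : n) : |Real.log (u i) - Real.log (v i)| ≤ R - 1 := by
  obtain ⟨j₀, hj₀⟩ := hle
  obtain ⟨j₁, hj₁⟩ := hge
  have hR₁ : 1 ≤ R :=
    le_of_mul_le_mul_right (by simpa using h i i) (mul_pos (hu i) (hv i))
  have hR₀ : 0 < R := by linarith
  have hu_le : u i ≤ R * v i := by
    refine le_of_mul_le_mul_right ((h i j₀).trans ?_) (hv j₀)
    nlinarith [mul_le_mul_of_nonneg_left hj₀ (mul_nonneg hR₀.le (hv i).le)]
  have hv_le : v i ≤ R * u i := by
    refine le_of_mul_le_mul_right ?_ (hu j₁)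
    nlinarith [h j₁ i, mul_le_mul_of_nonneg_left hj₁ (mul_nonneg hR₀.le (hu i).le)]
  have hlogR := Real.log_le_sub_one_of_pos hR₀
  have h₁ := Real.log_le_log (hu i) hu_le
  have h₂ := Real.log_le_log (hv i) hv_le
  rw [Real.log_mul hR₀.ne' (hv i).ne'] at h₁
  rw [Real.log_mul hR₀.ne' (hu i).ne'] at h₂
  rw [abs_sub_le_iff]
  constructor <;> linarith

end RatiosWithin

section SinkhornScaling

variable {ι : Type*} [Fintype ι] {A : Matrix ι ι ℝ}

noncomputable def sinkhornStep (A : Matrix ι ι ℝ) (y : ι → ℝ) : ι → ℝ :=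
  ((A *ᵥ y)⁻¹ ᵥ* A)⁻¹

noncomputable def sinkhornScaling (A : Matrix ι ι ℝ) (k : ℕ) : ι → ℝ :=
  (sinkhornStep A)^[k] 1

theorem sinkhornScaling_succ (A : Matrix ι ι ℝ) (k : ℕ) :
    sinkhornScaling A (k + 1) = sinkhornStep A (sinkhornScaling A k) :=
  Function.iterate_succ_apply' _ _ _

theorem mulVec_pos_of_pos {y : ι → ℝ} (hA : ∀ i j, 0 < A i j) (hy : ∀ j, 0 < y j) (i : ι) :
    0 < (A *ᵥ y) i :=
  Finset.sum_pos (fun j _ => mul_pos (hA i j) (hy j)) ⟨i, Finset.mem_univ i⟩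

theorem vecMul_pos_of_pos {x : ι → ℝ} (hA : ∀ i j, 0 < A i j) (hx : ∀ i, 0 < x i) (j : ι) :
    0 < (x ᵥ* A) j :=
  Finset.sum_pos (fun i _ => mul_pos (hx i) (hA i j)) ⟨j, Finset.mem_univ j⟩

theorem inv_mulVec_pos {y : ι → ℝ} (hA : ∀ i j, 0 < A i j) (hy : ∀ j, 0 < y j) (i : ι) :
    0 < (A *ᵥ y)⁻¹ i :=
  inv_pos.2 (mulVec_pos_of_pos hA hy i)

theorem sinkhornStep_pos {y : ι → ℝ} (hA : ∀ i j, 0 < A i j) (hy : ∀ j, 0 < y j) (j : ι) :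
    0 < sinkhornStep A y j :=
  inv_pos.2 (vecMul_pos_of_pos hA (inv_mulVec_pos hA hy) j)

theorem sinkhornScaling_pos (hA : ∀ i j, 0 < A i j) (k : ℕ) (j : ι) :
    0 < sinkhornScaling A k j := by
  induction k generalizing j with
  | zero => exact one_pos
  | succ k ih => rw [sinkhornScaling_succ]; exact sinkhornStep_pos hA ih j

theorem RatiosWithin.sinkhornStep {κ R : ℝ} {u v : ι → ℝ} (hA : ∀ i j, 0 < A i j)
    (hκ : CrossRatiosAtLeast κ A) (hu : ∀ j, 0 < u j) (hv : ∀ j, 0 < v j)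
    (h : RatiosWithin R u v) :
    RatiosWithin (1 + (1 - κ) ^ 2 * (R - 1)) (sinkhornStep A u) (sinkhornStep A v) := by
  have hAt : ∀ i j, 0 < Aᵀ i j := fun i j => hA j i
  have h₁ := (h.mulVec hA hκ hv).inv (mulVec_pos_of_pos hA hu) (mulVec_pos_of_pos hA hv)
  have h₂ := (h₁.mulVec hAt hκ.transpose (inv_mulVec_pos hA hv)).inv
    (mulVec_pos_of_pos hAt (inv_mulVec_pos hA hu)) (mulVec_pos_of_pos hAt (inv_mulVec_pos hA hv))
  simp only [mulVec_transpose] at h₂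
  rwa [show 1 + (1 - κ) ^ 2 * (R - 1) = κ + (1 - κ) * (κ + (1 - κ) * R) by ring]

/-- Row normalization followed by column normalization preserves the total mass `card ι`, so
the column scaling cannot grow or shrink uniformly in one step. -/
theorem exists_sinkhornStep_le_and_exists_le_sinkhornStep [Nonempty ι] {y : ι → ℝ}
    (hA : ∀ i j, 0 < A i j) (hy : ∀ j, 0 < y j) :
    (∃ j, sinkhornStep A y j ≤ y j) ∧ ∃ j, y j ≤ sinkhornStep A y j := by
  set c := (A *ᵥ y)⁻¹ ᵥ* A
  have hc : ∀ j, 0 < c j := vecMul_pos_of_pos hA (inv_mulVec_pos hA hy)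
  have hstep : ∀ j, c j * sinkhornStep A y j = 1 := fun j => mul_inv_cancel₀ (hc j).ne'
  have hmass : ∑ j, c j * sinkhornStep A y j = ∑ j, c j * y j := by
    change _ = c ⬝ᵥ y
    rw [← dotProduct_mulVec]
    simp only [hstep, dotProduct, Pi.inv_apply, inv_mul_cancel₀ (mulVec_pos_of_pos hA hy _).ne']
  constructor
  · obtain ⟨j, -, hj⟩ := Finset.exists_le_of_sum_le Finset.univ_nonempty hmass.le
    exact ⟨j, le_of_mul_le_mul_left hj (hc j)⟩
  · obtain ⟨j, -, hj⟩ := Finset.exists_le_of_sum_le Finset.univ_nonempty hmass.ge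
    exact ⟨j, le_of_mul_le_mul_left hj (hc j)⟩

theorem exists_ratiosWithin_sinkhornScaling {κ : ℝ} (hA : ∀ i j, 0 < A i j)
    (hκ : CrossRatiosAtLeast κ A) :
    ∃ C, 0 ≤ C ∧ ∀ k, RatiosWithin (1 + C * ((1 - κ) ^ 2) ^ k)
      (sinkhornScaling A (k + 1)) (sinkhornScaling A k) := by
  obtain ⟨R, hR, hR₀⟩ := exists_ratiosWithin (sinkhornScaling_pos hA 1) (sinkhornScaling_pos hA 0)
  refine ⟨R - 1, by linarith, fun k => ?_⟩
  induction k with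
  | zero => simpa using hR₀
  | succ k ih =>
    have := ih.sinkhornStep hA hκ (sinkhornScaling_pos hA _) (sinkhornScaling_pos hA _)
    rw [← sinkhornScaling_succ, ← sinkhornScaling_succ] at this
    convert this using 1
    ring

theorem exists_tendsto_sinkhornScaling (hA : ∀ i j, 0 < A i j) :
    ∃ y, (∀ j, 0 < y j) ∧ Tendsto (sinkhornScaling A) atTop (𝓝 y) := by
  obtain ⟨κ, hκ₀, hκ₁, hκ⟩ := exists_crossRatiosAtLeast hA
  obtain ⟨C, hC, hratio⟩ := exists_ratiosWithin_sinkhornScaling hA hκ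
  set logScaling : ℕ → ι → ℝ := fun k j => Real.log (sinkhornScaling A k j)
  have hdist : ∀ k, dist (logScaling k) (logScaling (k + 1)) ≤ C * ((1 - κ) ^ 2) ^ k := by
    intro k
    refine (dist_pi_le_iff (by positivity)).2 fun j => ?_
    have : Nonempty ι := ⟨j⟩
    obtain ⟨hle, hge⟩ := exists_sinkhornStep_le_and_exists_le_sinkhornStep hA
      (sinkhornScaling_pos hA k)
    rw [← sinkhornScaling_succ] at hle hge
    rw [Real.dist_eq, abs_sub_comm]
    simpa using (hratio k).abs_log_sub_log_le (sinkhornScaling_pos hA _)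
      (sinkhornScaling_pos hA _) hle hge j
  have hr : (1 - κ) ^ 2 < 1 := by nlinarith
  obtain ⟨z, hz⟩ := cauchySeq_tendsto_of_complete (cauchySeq_of_le_geometric _ C hr hdist)
  refine ⟨fun j => Real.exp (z j), fun j => Real.exp_pos _, tendsto_pi_nhds.2 fun j => ?_⟩
  exact ((Real.continuous_exp.tendsto _).comp (tendsto_pi_nhds.1 hz j)).congr fun k =>
    Real.exp_log (sinkhornScaling_pos hA k j)

theorem continuousAt_inv_mulVec {y : ι → ℝ} (hA : ∀ i j, 0 < A i j) (hy : ∀ j, 0 < y j) :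
    ContinuousAt (fun y => (A *ᵥ y)⁻¹) y :=
  continuousAt_pi.2 fun i => ((continuous_apply i).comp
    (continuous_const.matrix_mulVec continuous_id)).continuousAt.inv₀
    (mulVec_pos_of_pos hA hy i).ne'

theorem continuousAt_sinkhornStep {y : ι → ℝ} (hA : ∀ i j, 0 < A i j) (hy : ∀ j, 0 < y j) :
    ContinuousAt (sinkhornStep A) y := by
  have hvecMul : ContinuousAt (fun y => (A *ᵥ y)⁻¹ ᵥ* A) y :=
    (continuous_id.matrix_vecMul continuous_const).continuousAt.comp
      (continuousAt_inv_mulVec hA hy)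
  exact continuousAt_pi.2 fun j => ((continuous_apply j).continuousAt.comp hvecMul).inv₀
    (vecMul_pos_of_pos hA (inv_mulVec_pos hA hy) j).ne'

theorem sinkhornStep_eq_of_tendsto {y : ι → ℝ} (hA : ∀ i j, 0 < A i j) (hy : ∀ j, 0 < y j)
    (hlim : Tendsto (sinkhornScaling A) atTop (𝓝 y)) : sinkhornStep A y = y := by
  refine tendsto_nhds_unique ?_ ((tendsto_add_atTop_iff_nat 1).2 hlim)
  simp only [sinkhornScaling_succ]
  exact (continuousAt_sinkhornStep hA hy).tendsto.comp hlim

theorem diagonal_mul_mul_diagonal_mem_doublyStochastic_s9 [DecidableEq ι] {y : ι → ℝ}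
    (hA : ∀ i j, 0 < A i j) (hy : ∀ j, 0 < y j) (hfix : sinkhornStep A y = y) :
    diagonal (A *ᵥ y)⁻¹ * A * diagonal y ∈ doublyStochastic ℝ ι := by
  refine mem_doublyStochastic_iff_sum.2 ⟨fun i j => ?_, fun i => ?_, fun j => ?_⟩
  · simp only [mul_diagonal, diagonal_mul]
    exact (mul_pos (mul_pos (inv_mulVec_pos hA hy i) (hA i j)) (hy j)).le
  · simp only [mul_diagonal, diagonal_mul, mul_assoc, ← Finset.mul_sum]
    exact inv_mul_cancel₀ (mulVec_pos_of_pos hA hy i).ne'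
  · simp only [mul_diagonal, diagonal_mul]
    rw [← Finset.sum_mul, ← congrFun hfix j]
    exact mul_inv_cancel₀ (vecMul_pos_of_pos hA (inv_mulVec_pos hA hy) j).ne'

end SinkhornScaling

theorem rowNorm_diagonal_mul_mul_diagonal {n : ℕ} {x y : Fin n → ℝ} (A : Matrix (Fin n) (Fin n) ℝ)
    (hx : ∀ i, x i ≠ 0) :
    rowNorm (diagonal x * A * diagonal y) = diagonal (A *ᵥ y)⁻¹ * A * diagonal y := by
  ext i j
  have hsum : ∑ j', x i * A i j' * y j' = x i * (A *ᵥ y) i := by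
    simp only [Matrix.mulVec, dotProduct, Finset.mul_sum, mul_assoc]
  simp only [rowNorm, of_apply, mul_diagonal, diagonal_mul, hsum, Pi.inv_apply]
  rw [mul_assoc, mul_div_mul_left _ _ (hx i), div_eq_inv_mul, mul_assoc]

theorem colNorm_diagonal_mul_mul_diagonal {n : ℕ} {x y : Fin n → ℝ} (A : Matrix (Fin n) (Fin n) ℝ)
    (hy : ∀ j, y j ≠ 0) :
    colNorm (diagonal x * A * diagonal y) = diagonal x * A * diagonal (x ᵥ* A)⁻¹ := by
  ext i j
  have hsum : ∑ i', x i' * A i' j * y j = (x ᵥ* A) j * y j := by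
    simp only [Matrix.vecMul, dotProduct, Finset.sum_mul]
  simp only [colNorm, of_apply, mul_diagonal, diagonal_mul, hsum, Pi.inv_apply]
  rw [mul_div_mul_right _ _ (hy j), div_eq_mul_inv]

theorem sinkhornSeq_succ {n : ℕ} (θ : Matrix (Fin n) (Fin n) ℝ) (k : ℕ) :
    sinkhornSeq θ (k + 1) = diagonal (sinkhornSeq θ 0 *ᵥ sinkhornScaling (sinkhornSeq θ 0) k)⁻¹ *
      sinkhornSeq θ 0 * diagonal (sinkhornScaling (sinkhornSeq θ 0) (k + 1)) := by
  set A := sinkhornSeq θ 0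
  have hA : ∀ i j, 0 < A i j := fun i j => Real.exp_pos _
  have hstep : ∀ {x y : Fin n → ℝ}, (∀ i, 0 < x i) → (∀ j, 0 < y j) →
      colNorm (rowNorm (diagonal x * A * diagonal y)) =
        diagonal (A *ᵥ y)⁻¹ * A * diagonal (sinkhornStep A y) := fun hx hy => by
    rw [rowNorm_diagonal_mul_mul_diagonal A fun i => (hx i).ne',
      colNorm_diagonal_mul_mul_diagonal A fun j => (hy j).ne', sinkhornStep]
  rw [sinkhornScaling_succ]
  induction k with
  | zero =>
    have hA₁ : sinkhornSeq θ 0 = diagonal 1 * A * diagonal 1 := by simp [A]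
    rw [sinkhornSeq, hA₁]
    exact hstep (fun _ => one_pos) (fun _ => one_pos)
  | succ k ih =>
    rw [sinkhornSeq, ih, ← sinkhornScaling_succ]
    exact hstep (inv_mulVec_pos hA (sinkhornScaling_pos hA k)) (sinkhornScaling_pos hA _)

/-- **Sinkhorn iteration convergence.** For every real `n × n` matrix `θ`, the sequence of
alternating row/column normalizations started from the entrywise exponential `exp θ` converges,
and its limit is a doubly stochastic matrix. -/
theorem sinkhornSeq_tendsto_doublyStochastic (n : ℕ) (θ : Matrix (Fin n) (Fin n) ℝ) :
    ∃ L : Matrix (Fin n) (Fin n) ℝ, L ∈ doublyStochastic ℝ (Fin n) ∧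
      Filter.Tendsto (sinkhornSeq θ) Filter.atTop (nhds L) := by
  set A := sinkhornSeq θ 0
  have hA : ∀ i j, 0 < A i j := fun i j => Real.exp_pos _
  obtain ⟨y, hy, hlim⟩ := exists_tendsto_sinkhornScaling hA
  refine ⟨diagonal (A *ᵥ y)⁻¹ * A * diagonal y,
    diagonal_mul_mul_diagonal_mem_doublyStochastic_s9 hA hy (sinkhornStep_eq_of_tendsto hA hy hlim),
    (tendsto_add_atTop_iff_nat 1).1 ?_⟩
  have hcont : Continuous fun p : (Fin n → ℝ) × (Fin n → ℝ) => diagonal p.1 * A * diagonal p.2 := by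
    fun_prop
  have hscaling : Tendsto (fun k => ((A *ᵥ sinkhornScaling A k)⁻¹, sinkhornScaling A (k + 1)))
      atTop (𝓝 ((A *ᵥ y)⁻¹, y)) :=
    ((continuousAt_inv_mulVec hA hy).tendsto.comp hlim).prodMk_nhds
      ((tendsto_add_atTop_iff_nat 1).2 hlim)
  exact ((hcont.tendsto _).comp hscaling).congr fun k => (sinkhornSeq_succ θ k).symm
end

section
/- For every n×n doubly stochastic matrix D, there exists an n×n permutation matrix P with ⟨P, D⟩_F ≥ ⟨D, D⟩_F. -/
open Matrix

/-- The Frobenius inner product of two real `n × n` matrices. -/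
def frobInner {n : ℕ} (A B : Matrix (Fin n) (Fin n) ℝ) : ℝ :=
  ∑ i, ∑ j, A i j * B i j

/-- For every `n × n` doubly stochastic matrix `D` there exists a permutation matrix `P` with
`⟨P, D⟩_F ≥ ⟨D, D⟩_F`. -/
theorem exists_permMatrix_frobInner_ge_self (n : ℕ) (D : Matrix (Fin n) (Fin n) ℝ)
    (hD : D ∈ doublyStochastic ℝ (Fin n)) :
    ∃ σ : Equiv.Perm (Fin n), frobInner D D ≤ frobInner (σ.permMatrix ℝ) D := by
  obtain ⟨w, hw0, hw1, hwD⟩ := exists_eq_sum_perm_of_mem_doublyStochastic hD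
  have key : ∑ σ : Equiv.Perm (Fin n), w σ * frobInner (σ.permMatrix ℝ) D
      = frobInner D D := by
    rw [← hwD]
    simp only [frobInner, Finset.mul_sum, Matrix.sum_apply, Matrix.smul_apply, smul_eq_mul,
      Finset.sum_mul]
    rw [Finset.sum_comm]
    congr 1; ext i
    rw [Finset.sum_comm]
    refine Finset.sum_congr rfl fun j _ => ?_
    rw [Finset.sum_comm]
    exact Finset.sum_congr rfl fun _ _ => Finset.sum_congr rfl fun _ _ => by ring
  by_contra h
  push_neg at h
  have hlt : ∑ σ : Equiv.Perm (Fin n), w σ * frobInner (σ.permMatrix ℝ) D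
      < ∑ σ : Equiv.Perm (Fin n), w σ * frobInner D D := by
    obtain ⟨σ₀, hσ₀⟩ : ∃ σ : Equiv.Perm (Fin n), 0 < w σ := by
      by_contra hc
      push_neg at hc
      have : ∀ σ : Equiv.Perm (Fin n), w σ = 0 := fun σ => le_antisymm (hc σ) (hw0 σ)
      simp [this] at hw1
    refine Finset.sum_lt_sum (fun σ _ => ?_) ⟨σ₀, Finset.mem_univ _, ?_⟩
    · exact mul_le_mul_of_nonneg_left (h σ).le (hw0 σ)
    · exact mul_lt_mul_of_pos_left (h σ₀) hσ₀
  rw [key, ← Finset.sum_mul, hw1, one_mul] at hlt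
  exact lt_irrefl _ hlt
end
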